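/- arXiv:1310.3883 — 2 statements merged into one kernel-verified Lean document; each statement's English description precedes it below -/
import Mathlib

section
/- With γ₀(p) = g₀·p/(σ²(1+ηγ*) + ηγ*h₀·p), a point p > 0 is a critical point of the map p ↦ f(γ₀(p))/p if and only if γ = γ₀(p) satisfies (γ - (h₀γ*η/g₀)·γ²)·f'(γ) = f(γ). -/
/-!
Write `γ₀(q) = g₀ q / (A + B q)` with `A = σ²(1 + ηγ*)` and `B = ηγ*h₀`. By the quotient rule,
`d/dp [f(γ₀ p)/p] = (p γ₀'(p) f'(γ₀ p) - f(γ₀ p)) / p²`, so the critical points are exactly the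
solutions of `p γ₀'(p) f'(γ₀ p) = f(γ₀ p)`. Since `γ₀'(p) = g₀ A / (A + B p)²`, the factor
`p γ₀'(p)` is the quadratic `γ₀ - (B / g₀) γ₀²` in `γ₀ = γ₀(p)`.
-/

theorem hasDerivAt_mul_div_linear {g a b x : ℝ} (hx : a + b * x ≠ 0) :
    HasDerivAt (fun q => g * q / (a + b * q)) (g * a / (a + b * x) ^ 2) x := by
  have hnum : HasDerivAt (fun q : ℝ => g * q) g x := by
    simpa using (hasDerivAt_id x).const_mul g
  have hden : HasDerivAt (fun q : ℝ => a + b * q) b x := by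
    simpa using ((hasDerivAt_id x).const_mul b).const_add a
  exact (hnum.fun_div hden hx).congr_deriv (by ring)

theorem mul_deriv_mul_div_linear {g a b x : ℝ} (hg : g ≠ 0) :
    x * (g * a / (a + b * x) ^ 2) = g * x / (a + b * x) - b / g * (g * x / (a + b * x)) ^ 2 := by
  field_simp
  ring

theorem deriv_comp_div_id_eq_zero_iff {f γ : ℝ → ℝ} {γ' x : ℝ} (hγ : HasDerivAt γ γ' x)
    (hf : DifferentiableAt ℝ f (γ x)) (hx : x ≠ 0) :
    deriv (fun q => f (γ q) / q) x = 0 ↔ x * γ' * deriv f (γ x) = f (γ x) := by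
  have hquot : HasDerivAt (fun q => f (γ q) / q)
      ((deriv f (γ x) * γ' * x - f (γ x) * 1) / x ^ 2) x :=
    (hf.hasDerivAt.comp x hγ).fun_div (hasDerivAt_id x) hx
  rw [hquot.deriv, div_eq_zero_iff, sub_eq_zero, or_iff_left (pow_ne_zero 2 hx)]
  constructor <;> intro h <;> linarith

/-- First-order condition for the leader: p > 0 is a critical point of
p ↦ f(γ₀(p))/p iff γ = γ₀(p) satisfies (γ - (h₀γ*η/g₀)γ²)f'(γ) = f(γ). -/
theorem leader_first_order_condition
    (f : ℝ → ℝ) (σ2 g0 h0 γs η p : ℝ)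
    (hσ : 0 < σ2) (hg0 : 0 < g0) (hh0 : 0 < h0) (hγs : 0 < γs)
    (hη : 0 < η) (hp : 0 < p)
    (γ0 : ℝ → ℝ)
    (hγ0 : ∀ q, γ0 q = g0 * q / (σ2 * (1 + η * γs) + η * γs * h0 * q))
    (hdf : DifferentiableAt ℝ f (γ0 p)) :
    deriv (fun q => f (γ0 q) / q) p = 0 ↔
      (γ0 p - h0 * γs * η / g0 * (γ0 p) ^ 2) * deriv f (γ0 p) = f (γ0 p) := by
  have hden : σ2 * (1 + η * γs) + η * γs * h0 * p ≠ 0 := by positivity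
  have hγ : HasDerivAt γ0 _ p := funext hγ0 ▸ hasDerivAt_mul_div_linear (g := g0) hden
  rw [deriv_comp_div_id_eq_zero_iff hγ hdf hp.ne', mul_deriv_mul_div_linear hg0.ne', ← hγ0,
    show η * γs * h0 = h0 * γs * η by ring]
end

section
/- Let f : (0,∞) → (0,∞) with f(x)/x maximized uniquely at γ*. In the sparse model with F followers each with distinct best carriers B_f ≠ B₀ different from the leader's best carrier, the strategy profile where player n transmits power γ*·σ²/g_n^{B_n} on carrier B_n and zero elsewhere is a Nash equilibrium: no player can increase his utility by any unilateral deviation. -/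
open Finset

lemma sparse_aux {K : ℕ} (G D : Fin K → ℝ) (σ2 γs : ℝ) (f : ℝ → ℝ) (b : Fin K)
    (hσ : 0 < σ2) (hγs : 0 < γs)
    (hG : ∀ k, 0 < G k) (hD : ∀ k, σ2 ≤ D k) (hDb : D b = σ2)
    (hGb : ∀ k, G k ≤ G b)
    (hf0 : f 0 = 0) (hC : 0 < f γs / γs)
    (hfle : ∀ x : ℝ, 0 ≤ x → f x ≤ f γs / γs * x)
    (pp : Fin K → ℝ) (hpp : ∀ k, pp k = if k = b then γs * σ2 / G b else 0)
    (q : Fin K → ℝ) (hq : ∀ k, 0 ≤ q k) (hqs : 0 < ∑ k, q k) :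
    (∑ k, f (G k * q k / D k)) / (∑ k, q k)
      ≤ (∑ k, f (G k * pp k / D k)) / (∑ k, pp k) := by
  have hGb0 : 0 < G b := hG b
  have hppsum : ∑ k, pp k = γs * σ2 / G b := by
    rw [Finset.sum_congr rfl (fun k _ => hpp k), Finset.sum_ite_eq' univ b]
    simp
  have hfsum : ∑ k, f (G k * pp k / D k) = f γs := by
    rw [show (∑ k, f (G k * pp k / D k))
        = ∑ k, if k = b then f γs else 0 from ?_, Finset.sum_ite_eq' univ b]
    · simp
    · refine Finset.sum_congr rfl fun k _ => ?_
      rw [hpp k]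
      by_cases hk : k = b
      · subst hk
        rw [if_pos rfl, if_pos rfl, hDb]
        congr 1
        field_simp
      · simp [hk, hf0]
  have hrhs : (∑ k, f (G k * pp k / D k)) / (∑ k, pp k) = f γs / γs * (G b / σ2) := by
    rw [hfsum, hppsum]
    field_simp
  rw [hrhs, div_le_iff₀ hqs]
  calc ∑ k, f (G k * q k / D k)
      ≤ ∑ k, f γs / γs * (G b / σ2) * q k := by
        refine Finset.sum_le_sum fun k _ => ?_
        have h1 : f (G k * q k / D k) ≤ f γs / γs * (G k * q k / D k) :=
          hfle _ (div_nonneg (mul_nonneg (hG k).le (hq k)) (hσ.trans_le (hD k)).le)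
        have h2 : G k * q k / D k ≤ G b * q k / σ2 :=
          div_le_div₀ (mul_nonneg hGb0.le (hq k))
            (mul_le_mul_of_nonneg_right (hGb k) (hq k)) hσ (hD k)
        calc f (G k * q k / D k) ≤ f γs / γs * (G k * q k / D k) := h1
          _ ≤ f γs / γs * (G b * q k / σ2) := by
              exact mul_le_mul_of_nonneg_left h2 hC.le
          _ = f γs / γs * (G b / σ2) * q k := by ring
    _ = f γs / γs * (G b / σ2) * ∑ k, q k := by rw [← Finset.mul_sum]

/-- Sparse model Nash equilibrium: when all players have distinct best
carriers (followers' best carriers differ from the leader's), the profile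
where each player n puts power γ*σ²/g_n^{B_n} on carrier B_n and zero
elsewhere is a Nash equilibrium. -/
theorem sparse_nash_equilibrium
    (K F : ℕ)
    (g : Fin (F + 1) → Fin K → ℝ) (h0 : Fin K → ℝ) (σ2 γs : ℝ) (f : ℝ → ℝ)
    (hσ : 0 < σ2) (hγs : 0 < γs)
    (hg : ∀ n k, 0 < g n k) (hh : ∀ k, 0 ≤ h0 k)
    (hf0 : f 0 = 0) (hfpos : ∀ x : ℝ, 0 < x → 0 < f x)
    (hmax : ∀ x : ℝ, 0 < x → x ≠ γs → f x / x < f γs / γs)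
    (B : Fin (F + 1) → Fin K)
    (hB : ∀ n k, g n k ≤ g n (B n))
    (hBinj : Function.Injective B)
    (p : Fin (F + 1) → Fin K → ℝ)
    (hp : ∀ n k, p n k = if k = B n then γs * σ2 / g n (B n) else 0) :
    -- the leader cannot profitably deviate
    (∀ q : Fin K → ℝ, (∀ k, 0 ≤ q k) → 0 < ∑ k, q k →
        (∑ k, f (g 0 k * q k / σ2)) / (∑ k, q k)
          ≤ (∑ k, f (g 0 k * p 0 k / σ2)) / (∑ k, p 0 k)) ∧
    -- no follower can profitably deviate
    (∀ fi : Fin (F + 1), fi ≠ 0 →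
      ∀ q : Fin K → ℝ, (∀ k, 0 ≤ q k) → 0 < ∑ k, q k →
        (∑ k, f (g fi k * q k / (σ2 + h0 k * p 0 k))) / (∑ k, q k)
          ≤ (∑ k, f (g fi k * p fi k / (σ2 + h0 k * p 0 k))) /
              (∑ k, p fi k)) := by
  have hC : 0 < f γs / γs := div_pos (hfpos γs hγs) hγs
  have hfle : ∀ x : ℝ, 0 ≤ x → f x ≤ f γs / γs * x := by
    intro x hx
    rcases hx.eq_or_lt with h | h
    · simp [← h, hf0]
    · by_cases hxγ : x = γs
      · subst hxγ
        rw [div_mul_cancel₀ _ h.ne']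
      · have := hmax x h hxγ
        calc f x = f x / x * x := by field_simp
          _ ≤ f γs / γs * x := mul_le_mul_of_nonneg_right this.le hx
  have hp0 : ∀ k, 0 ≤ p 0 k := by
    intro k
    rw [hp 0 k]
    split
    · exact le_of_lt (div_pos (mul_pos hγs hσ) (hg 0 (B 0)))
    · exact le_refl 0
  constructor
  · intro q hq hqs
    exact sparse_aux (g 0) (fun _ => σ2) σ2 γs f (B 0) hσ hγs (hg 0)
      (fun _ => le_refl σ2) rfl (hB 0) hf0 hC hfle (p 0) (hp 0) q hq hqs
  · intro fi hfi q hq hqs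
    have hBfi : B fi ≠ B 0 := fun h => hfi (hBinj h)
    exact sparse_aux (g fi) (fun k => σ2 + h0 k * p 0 k) σ2 γs f (B fi) hσ hγs
      (hg fi)
      (fun k => le_add_of_nonneg_right (mul_nonneg (hh k) (hp0 k)))
      (by simp [hp 0 (B fi), hBfi])
      (hB fi) hf0 hC hfle (p fi) (hp fi) q hq hqs
end
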